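/- Let n, s, a1 be integers with 2 ≤ s < a1 ≤ n. Then the sum over all subsets A of {1,…,n} of cardinality a1 of the quantity (a1 − s)/(n − T(A)) equals (a1/n)·C(n, a1); equivalently, the average of w0(A) = (a1 − s)/(n − T(A)) over all such subsets A equals a1/n. (This is the first half of Theorem 1: E(w0) = a1/n, where w0 is the proportion of accepters among students with random number strictly greater than T.) -/

import Mathlib

/-!
Split the sum according to the value `t` of `T(A)`. An `a1`-subset of `{1,…,n}` whose `s`-th
smallest element is `t` consists of `t`, `s - 1` elements of `{1,…,t-1}` and `a1 - s` elements of
`{t+1,…,n}`, so there are `C(t-1, s-1) C(n-t, a1-s)` of them. The absorption identity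
`C(n-t, a1-s) (a1-s)/(n-t) = C(n-t-1, a1-s-1)` turns the weighted sum into the same fibre count
for `(a1-1)`-subsets of `{1,…,n-1}`, whose total is `C(n-1, a1-1) = (a1/n) C(n, a1)`.
-/

/-- `kthSmallest A k` is the `k`-th smallest element of the finite set `A`
(so `kthSmallest A 1` is the minimum), obtained as entry `k - 1` of the
increasing enumeration of `A`. In the waiting-list model, for `s ≤ a1 = |A|`,
`T(A) = kthSmallest A s` is the random number of the last student receiving
an offer, where `A` is the set of positions of accepters. -/
def kthSmallest (A : Finset ℕ) (k : ℕ) : ℕ :=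
  (A.sort (· ≤ ·)).getD (k - 1) 0

open Finset

theorem Finset.card_filter_lt_orderEmbOfFin {α : Type*} [LinearOrder α] (s : Finset α) {k : ℕ}
    (h : #s = k) (i : Fin k) : #{x ∈ s | x < s.orderEmbOfFin h i} = i := by
  have : {x ∈ s | x < s.orderEmbOfFin h i} = (Iio i).map (s.orderEmbOfFin h).toEmbedding := by
    ext x
    simp only [mem_filter, mem_map, mem_Iio, RelEmbedding.coe_toEmbedding]
    constructor
    · rintro ⟨hx, hlt⟩
      obtain ⟨j, rfl⟩ : x ∈ Set.range (s.orderEmbOfFin h) := by simpa using hx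
      exact ⟨j, by simpa using hlt, rfl⟩
    · rintro ⟨j, hj, rfl⟩
      exact ⟨orderEmbOfFin_mem s h j, by simpa using hj⟩
  rw [this, card_map, Fin.card_Iio]

theorem kthSmallest_add_one (A : Finset ℕ) {i : ℕ} (hi : i < #A) :
    kthSmallest A (i + 1) = A.orderEmbOfFin rfl ⟨i, hi⟩ := by
  rw [kthSmallest, Nat.add_sub_cancel, List.getD_eq_getElem _ _ (by simpa using hi),
    orderEmbOfFin_apply]
  rfl

theorem kthSmallest_add_one_eq_iff {A : Finset ℕ} {i : ℕ} (hi : i < #A) {t : ℕ} :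
    kthSmallest A (i + 1) = t ↔ t ∈ A ∧ #{x ∈ A | x < t} = i := by
  rw [kthSmallest_add_one A hi]
  constructor
  · rintro rfl
    exact ⟨orderEmbOfFin_mem A rfl _, card_filter_lt_orderEmbOfFin A rfl _⟩
  · rintro ⟨ht, hcard⟩
    obtain ⟨j, rfl⟩ : t ∈ Set.range (A.orderEmbOfFin rfl) := by simpa using ht
    rw [card_filter_lt_orderEmbOfFin] at hcard
    exact congrArg _ (Fin.ext hcard.symm)

theorem card_powersetCard_filter_mem_card_lt {α : Type*} [LinearOrder α] (U : Finset α) {t : α}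
    (ht : t ∈ U) (i j : ℕ) :
    #{A ∈ U.powersetCard (i + 1 + j) | t ∈ A ∧ #{x ∈ A | x < t} = i}
      = (#{x ∈ U | x < t}).choose i * (#{x ∈ U | t < x}).choose j := by
  have insert_split :
      ∀ A : Finset α, t ∈ A → insert t ({x ∈ A | x < t} ∪ {x ∈ A | t < x}) = A := by
    intro A htA
    ext x
    simp only [mem_insert, mem_union, mem_filter]
    rcases lt_trichotomy x t with h | rfl | h <;> grind
  have card_insert_union : ∀ B C : Finset α, (∀ x ∈ B, x < t) → (∀ x ∈ C, t < x) →
      #(insert t (B ∪ C)) = #B + 1 + #C := by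
    intro B C hB hC
    rw [card_insert_of_notMem (by grind), card_union_of_disjoint
      (disjoint_left.2 fun x hxB hxC => (hB x hxB).asymm (hC x hxC))]
    ring
  rw [← card_powersetCard, ← card_powersetCard, ← card_product]
  refine card_nbij' (fun A => ({x ∈ A | x < t}, {x ∈ A | t < x})) (fun p => insert t (p.1 ∪ p.2))
    ?_ ?_ ?_ ?_
  · intro A hA
    simp only [coe_filter, Set.mem_ofPred_eq, mem_powersetCard] at hA
    obtain ⟨⟨hAU, hcardA⟩, htA, hcard⟩ := hA
    have hsplit := card_insert_union {x ∈ A | x < t} {x ∈ A | t < x} (by simp) (by simp)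
    rw [insert_split A htA] at hsplit
    simp only [coe_product, Set.mem_prod, mem_coe, mem_powersetCard]
    refine ⟨⟨filter_subset_filter _ hAU, hcard⟩, filter_subset_filter _ hAU, by omega⟩
  · rintro ⟨B, C⟩ hBC
    simp only [coe_product, Set.mem_prod, mem_coe, mem_powersetCard, subset_iff, mem_filter] at hBC
    obtain ⟨⟨hB, rfl⟩, hC, rfl⟩ := hBC
    simp only [coe_filter, Set.mem_ofPred_eq, mem_powersetCard]
    refine ⟨⟨?_, card_insert_union B C (by grind) (by grind)⟩, mem_insert_self _ _, ?_⟩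
    · grind [insert_subset_iff, union_subset_iff]
    · congr 1; ext x; simp only [mem_filter, mem_insert, mem_union]; grind
  · intro A hA
    simp only [coe_filter, Set.mem_ofPred_eq, mem_powersetCard] at hA
    exact insert_split A hA.2.1
  · rintro ⟨B, C⟩ hBC
    simp only [coe_product, Set.mem_prod, mem_coe, mem_powersetCard, subset_iff, mem_filter] at hBC
    ext x <;> simp only [mem_insert, mem_union, mem_filter] <;> grind

theorem card_filter_kthSmallest_eq (n i j : ℕ) {t : ℕ} (ht : t ∈ Icc 1 n) :
    #{A ∈ (Icc 1 n).powersetCard (i + 1 + j) | kthSmallest A (i + 1) = t}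
      = (t - 1).choose i * (n - t).choose j := by
  have below : {x ∈ Icc 1 n | x < t} = Ico 1 t := by
    ext; simp only [mem_filter, mem_Icc, mem_Ico]; grind
  have above : {x ∈ Icc 1 n | t < x} = Ioc t n := by
    ext; simp only [mem_filter, mem_Icc, mem_Ioc]; grind
  rw [filter_congr fun A hA => kthSmallest_add_one_eq_iff (by grind),
    card_powersetCard_filter_mem_card_lt _ ht, below, above, Nat.card_Ico, Nat.card_Ioc]

theorem sum_powersetCard_kthSmallest {M : Type*} [AddCommMonoid M] (n i j : ℕ) (f : ℕ → M) :
    ∑ A ∈ (Icc 1 n).powersetCard (i + 1 + j), f (kthSmallest A (i + 1))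
      = ∑ t ∈ Icc 1 n, ((t - 1).choose i * (n - t).choose j) • f t := by
  have maps_to : ∀ A ∈ (Icc 1 n).powersetCard (i + 1 + j), kthSmallest A (i + 1) ∈ Icc 1 n := by
    intro A hA
    rw [mem_powersetCard] at hA
    exact hA.1 ((kthSmallest_add_one_eq_iff (by omega)).1 rfl).1
  rw [← sum_fiberwise_of_maps_to maps_to]
  refine sum_congr rfl fun t ht => ?_
  rw [sum_congr rfl fun A hA => congrArg f (mem_filter.1 hA).2, sum_const,
    card_filter_kthSmallest_eq n i j ht]

theorem sum_choose_mul_choose (n i j : ℕ) :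
    ∑ t ∈ Icc 1 n, (t - 1).choose i * (n - t).choose j = n.choose (i + 1 + j) := by
  have := sum_powersetCard_kthSmallest n i j fun _ => 1
  simp only [smul_eq_mul, mul_one, sum_const, card_powersetCard, Nat.card_Icc,
    Nat.add_sub_cancel] at this
  exact this.symm

theorem cast_add_one_choose_add_one_mul_div {K : Type*} [Field K] [CharZero K] (m j : ℕ) :
    ((m + 1).choose (j + 1) : K) * ((j + 1) / (m + 1)) = m.choose j := by
  have h := Nat.add_one_mul_choose_eq m j
  field_simp
  exact_mod_cast h.symm

/-- **Theorem 1, first half: E(w₀) = a1/n.**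
For integers `2 ≤ s < a1 ≤ n`, the sum over all subsets `A` of `{1,…,n}` of
cardinality `a1` of `w₀(A) = (a1 − s)/(n − T(A))` (the proportion of accepters
among students with random number strictly greater than `T(A)`) equals
`(a1/n)·C(n, a1)`; i.e. the average of `w₀` over all such subsets is `a1/n`. -/
theorem expectation_w0 (n s a1 : ℕ) (hs : 2 ≤ s) (hsa : s < a1) (han : a1 ≤ n) :
    ∑ A ∈ (Finset.Icc 1 n).powersetCard a1,
      ((a1 : ℚ) - (s : ℚ)) / ((n : ℚ) - (kthSmallest A s : ℚ))
      = ((a1 : ℚ) / (n : ℚ)) * (n.choose a1 : ℚ) := by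
  obtain ⟨i, rfl⟩ : ∃ i, s = i + 1 := ⟨s - 1, by omega⟩
  obtain ⟨j, rfl⟩ : ∃ j, a1 = i + 1 + (j + 1) := ⟨a1 - i - 2, by omega⟩
  obtain ⟨m, rfl⟩ : ∃ m, n = m + 1 := ⟨n - 1, by omega⟩
  have accepters_after : ((i + 1 + (j + 1) : ℕ) : ℚ) - (i + 1 : ℕ) = j + 1 := by push_cast; ring
  have absorb : ∀ t ∈ Icc 1 m, ((t - 1).choose i * (m + 1 - t).choose (j + 1)) •
      (((j : ℚ) + 1) / ((m + 1 : ℕ) - (t : ℚ))) = ((t - 1).choose i * (m - t).choose j : ℕ) := by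
    intro t ht
    have hm : m + 1 - t = m - t + 1 := by grind
    have hq : ((m + 1 : ℕ) : ℚ) - t = (m - t : ℕ) + 1 := by
      rw [Nat.cast_sub (by grind : t ≤ m)]; push_cast; ring
    rw [hm, hq, nsmul_eq_mul, Nat.cast_mul, Nat.cast_mul, mul_assoc,
      cast_add_one_choose_add_one_mul_div]
  -- The term `t = n` has the junk weight `(a1 - s) / 0`, but its count `C(0, a1 - s)` is zero.
  rw [accepters_after,
    sum_powersetCard_kthSmallest (m + 1) i (j + 1) fun t => ((j : ℚ) + 1) / ((m + 1 : ℕ) - (t : ℚ)),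
    sum_Icc_succ_top (by omega), Nat.sub_self, Nat.choose_zero_succ, mul_zero, zero_smul, add_zero,
    sum_congr rfl absorb, ← Nat.cast_sum, sum_choose_mul_choose,
    ← cast_add_one_choose_add_one_mul_div m (i + 1 + j), mul_comm]
  push_cast
  congr 1
  ring
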